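/- Let G be a group, A an abelian group with trivial G-action, n ≥ 1, γ ∈ G with centralizer C_γ, and for each degree m let tr_γ denote the transgression map sending an m-cochain c : G^m → A to the (m−1)-cochain of C_γ given by tr_γ(c)(h_1,…,h_{m−1}) := Σ_{j=0}^{m−1} (−1)^j c(h_1,…,h_j, γ, h_{j+1},…,h_{m−1}). Then for every n-cochain b : G^n → A, the transgression tr_γ(d b) of its coboundary is itself a coboundary of an (n−1)-cochain of C_γ. Consequently, together with the fact that tr_γ sends cocycles to cocycles, the transgression formula induces a well-defined group homomorphism H^{n+1}(G; A) → H^n(C_γ; A) on group cohomology with trivial coefficients. -/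

import Mathlib

/-!
Splitting off the first argument of a cochain, `c ↦ c(a, ·)`, both the coboundary and the
alternating sum of insertions of `γ` satisfy simple recursions. Induction on the degree with these recursions gives
`d (tr_γ c) = - tr_γ (d c)` on every tuple whose entries commute with `γ`; commutation is needed
exactly once, to cancel `c(γa, …)` against `c(aγ, …)`. So `tr_γ` is a cochain map up to sign: it
sends coboundaries to coboundaries (`tr_γ (d b) = d (-tr_γ b)`) and cocycles to cocycles, hence
descends to cohomology.
-/

open Finset

/-- The inhomogeneous coboundary operator on cochains of a group `G` with values in an
abelian group `A` with trivial `G`-action, as an additive group homomorphism: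
`(d c)(g₀,…,gₙ) = c(g₁,…,gₙ) + ∑_{i=1}^{n} (−1)^i c(g₀,…,g_{i−1}·g_i,…,gₙ)
  + (−1)^{n+1} c(g₀,…,g_{n−1})`. -/
def dHom (G : Type*) [Group G] (A : Type*) [AddCommGroup A] (n : ℕ) :
    ((Fin n → G) → A) →+ ((Fin (n + 1) → G) → A) where
  toFun c := fun g => c (fun i => g i.succ) +
    ∑ j : Fin (n + 1), ((-1 : ℤ) ^ ((j : ℕ) + 1)) • c (Fin.contractNth j (· * ·) g)
  map_zero' := by
    funext g
    simp
  map_add' c₁ c₂ := by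
    funext g
    simp [smul_add, Finset.sum_add_distrib]
    abel

/-- The transgression of an `(n+1)`-cochain at `γ`: the alternating sum over all ways of
inserting `γ` among the arguments (which are taken in the centralizer of `γ`):
`tr_γ(c)(h₁,…,hₙ) = ∑_{j=0}^{n} (−1)^j c(h₁,…,h_j, γ, h_{j+1},…,hₙ)`. -/
def transgression {G : Type*} [Group G] {A : Type*} [AddCommGroup A] {n : ℕ} (γ : G)
    (c : (Fin (n + 1) → G) → A) :
    (Fin n → Subgroup.centralizer ({γ} : Set G)) → A :=
  fun h => ∑ j : Fin (n + 1), ((-1 : ℤ) ^ (j : ℕ)) • c (j.insertNth γ (fun i => (h i : G)))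

/-- Group cohomology `H^{m+1}(G; A)` with trivial coefficients: `(m+1)`-cocycles modulo
coboundaries of `m`-cochains. -/
abbrev Hgrp (G : Type*) [Group G] (A : Type*) [AddCommGroup A] (m : ℕ) :=
  (dHom G A (m + 1)).ker ⧸ ((dHom G A m).range.addSubgroupOf (dHom G A (m + 1)).ker)

namespace Fin
variable {α : Type*} {n : ℕ}

theorem contractNth_zero_cons (op : α → α → α) (a : α) (p : Fin (n + 1) → α) :
    contractNth 0 op (cons a p) = cons (op a (p 0)) (tail p) := by
  ext k
  cases k using Fin.cases <;> simp [contractNth, tail]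

theorem contractNth_succ_cons (op : α → α → α) (j : Fin (n + 1)) (a : α) (p : Fin (n + 1) → α) :
    contractNth j.succ op (cons a p) = cons a (contractNth j op p) := by
  ext k
  cases k using Fin.cases <;> simp [contractNth]

end Fin

section Coboundary
variable {G : Type*} [Group G] {A : Type*} [AddCommGroup A]

theorem dHom_zero_eq_zero (u : (Fin 0 → G) → A) : dHom G A 0 u = 0 := by
  ext g
  simp [dHom, Subsingleton.elim (Fin.contractNth 0 (· * ·) g) (fun i => g i.succ)]

theorem dHom_succ_cons {n : ℕ} (c : (Fin (n + 1) → G) → A) (a : G) (p : Fin (n + 1) → G) :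
    dHom G A (n + 1) c (Fin.cons a p) =
      c p - c (Fin.cons (a * p 0) (Fin.tail p)) + c (Fin.cons a (Fin.tail p)) -
        dHom G A n (fun t => c (Fin.cons a t)) p := by
  simp only [dHom, AddMonoidHom.coe_mk, ZeroHom.coe_mk, Fin.sum_univ_succ, Fin.cons_succ,
    Fin.contractNth_zero_cons, Fin.contractNth_succ_cons, Fin.val_zero, Fin.val_succ, pow_succ,
    pow_zero, mul_neg, mul_one, neg_smul, one_smul, sum_neg_distrib, Fin.tail_def]
  abel

theorem dHom_comp_monoidHom {H : Type*} [Group H] (f : H →* G) {n : ℕ} (c : (Fin n → G) → A)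
    (g : Fin (n + 1) → H) :
    dHom H A n (fun t => c (fun i => f (t i))) g = dHom G A n c (fun i => f (g i)) := by
  simp only [dHom, AddMonoidHom.coe_mk, ZeroHom.coe_mk]
  congr 1
  refine sum_congr rfl fun j _ => ?_
  congr 2
  exact Fin.comp_contractNth (· * ·) (· * ·) (map_mul f) j g

end Coboundary

section InsertionSum
variable {G : Type*} {A : Type*} [AddCommGroup A] (γ : G)

/-- The transgression formula on arbitrary tuples of `G`; `transgression γ c` is its restriction to
tuples in the centralizer, which keeps the induction below free of coercions. -/
def insertionSum {n : ℕ} : ((Fin (n + 1) → G) → A) →+ ((Fin n → G) → A) where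
  toFun c g := ∑ j : Fin (n + 1), ((-1 : ℤ) ^ (j : ℕ)) • c (j.insertNth γ g)
  map_zero' := by
    ext
    simp
  map_add' c₁ c₂ := by
    ext
    simp [smul_add, sum_add_distrib]

theorem insertionSum_zero_apply (c : (Fin 1 → G) → A) (g : Fin 0 → G) :
    insertionSum γ c g = c (Fin.cons γ g) := by
  simp [insertionSum]

theorem insertionSum_cons {n : ℕ} (c : (Fin (n + 2) → G) → A) (a : G) (p : Fin n → G) :
    insertionSum γ c (Fin.cons a p) =
      c (Fin.cons γ (Fin.cons a p)) - insertionSum γ (fun t => c (Fin.cons a t)) p := by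
  simp only [insertionSum, AddMonoidHom.coe_mk, ZeroHom.coe_mk, Fin.sum_univ_succ,
    Fin.insertNth_zero', Fin.insertNth_succ_cons, Fin.val_zero, Fin.val_succ, pow_zero, pow_succ,
    one_smul, mul_neg_one, neg_smul, sum_neg_distrib]
  abel

end InsertionSum

section Transgression
variable {G : Type*} [Group G] {A : Type*} [AddCommGroup A] (γ : G) {n : ℕ}

theorem dHom_insertionSum_apply {m : ℕ} (c : (Fin (m + 1) → G) → A) (g : Fin (m + 1) → G)
    (hg : ∀ i, Commute (g i) γ) :
    dHom G A m (insertionSum γ c) g = -insertionSum γ (dHom G A (m + 1) c) g := by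
  induction m with
  | zero =>
    obtain ⟨a, p, rfl⟩ := Fin.exists_cons g
    have hcomm : a * γ = γ * a := hg 0
    simp only [dHom_zero_eq_zero, insertionSum_cons, insertionSum_zero_apply,
      dHom_succ_cons, Fin.cons_zero, Fin.tail_cons, Pi.zero_apply, hcomm]
    abel
  | succ M ih =>
    obtain ⟨a, p, rfl⟩ := Fin.exists_cons g
    have hcomm : a * γ = γ * a := hg 0
    have hsum_slice : (fun t => insertionSum γ c (Fin.cons a t)) =
        (fun t => c (Fin.cons γ (Fin.cons a t))) - insertionSum γ (fun t => c (Fin.cons a t)) :=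
      funext fun t => insertionSum_cons γ c a t
    have hd_slice : (fun t => dHom G A (M + 1 + 1) c (Fin.cons a t)) =
        c - (fun t => c (Fin.cons (a * t 0) (Fin.tail t))) + (fun t => c (Fin.cons a (Fin.tail t)))
          - dHom G A (M + 1) (fun t => c (Fin.cons a t)) :=
      funext fun t => dHom_succ_cons c a t
    have ih_slice := ih (fun t => c (Fin.cons a t)) p (fun i => hg i.succ)
    obtain ⟨b, q, rfl⟩ := Fin.exists_cons p
    rw [dHom_succ_cons, hsum_slice, map_sub, Pi.sub_apply, ih_slice]
    rw [insertionSum_cons γ (dHom G A (M + 1 + 1) c) a, hd_slice, map_sub, map_add, map_sub]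
    simp only [Pi.sub_apply, Pi.add_apply, insertionSum_cons, dHom_succ_cons, Fin.cons_zero,
      Fin.tail_cons, hcomm]
    abel


theorem dHom_transgression (c : (Fin (n + 1) → G) → A) :
    dHom (Subgroup.centralizer {γ}) A n (transgression γ c) =
      -transgression γ (dHom G A (n + 1) c) := by
  ext h
  exact (dHom_comp_monoidHom (Subgroup.subtype _) _ h).trans <| dHom_insertionSum_apply γ c _ fun i =>
    Subgroup.mem_centralizer_singleton_iff.mp (h i).2

def transgressionHom : ((Fin (n + 1) → G) → A) →+ ((Fin n → Subgroup.centralizer {γ}) → A) where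
  toFun := transgression γ
  map_zero' := funext fun _ => congrFun (map_zero (insertionSum γ)) _
  map_add' c₁ c₂ := funext fun _ => congrFun (map_add (insertionSum γ) c₁ c₂) _

theorem transgression_dHom (b : (Fin (n + 1) → G) → A) :
    transgression γ (dHom G A (n + 1) b) =
      dHom (Subgroup.centralizer {γ}) A n (-transgression γ b) := by
  rw [map_neg, dHom_transgression, neg_neg]

theorem transgression_mem_ker {c : (Fin (n + 2) → G) → A} (hc : c ∈ (dHom G A (n + 2)).ker) :
    transgression γ c ∈ (dHom (Subgroup.centralizer {γ}) A (n + 1)).ker := by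
  rw [AddMonoidHom.mem_ker, dHom_transgression, AddMonoidHom.mem_ker.mp hc]
  exact neg_eq_zero.mpr (map_zero (transgressionHom γ))

end Transgression

/-- For every `(m+1)`-cochain `b` of `G` (i.e. every `n`-cochain with `n = m+1 ≥ 1`),
the transgression at `γ` of its coboundary is itself a coboundary of an `m`-cochain of the
centralizer `C_γ`.  Consequently (together with the fact that transgression sends cocycles to
cocycles), transgression induces a well-defined homomorphism of group cohomology groups
`H^{m+2}(G; A) →+ H^{m+1}(C_γ; A)` sending the class of a cocycle `c` to the class of
`tr_γ(c)`. -/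
theorem transgression_descends {G : Type*} [Group G] {A : Type*} [AddCommGroup A]
    (m : ℕ) (γ : G) :
    (∀ b : (Fin (m + 1) → G) → A,
      ∃ a : (Fin m → Subgroup.centralizer ({γ} : Set G)) → A,
        dHom (Subgroup.centralizer ({γ} : Set G)) A m a =
          transgression γ (dHom G A (m + 1) b)) ∧
    ∃ φ : Hgrp G A (m + 1) →+ Hgrp (Subgroup.centralizer ({γ} : Set G)) A m,
      ∀ (c : (Fin (m + 2) → G) → A) (hc : c ∈ (dHom G A (m + 2)).ker)
        (hc' : transgression γ c ∈ (dHom (Subgroup.centralizer ({γ} : Set G)) A (m + 1)).ker),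
        φ (QuotientAddGroup.mk ⟨c, hc⟩) = QuotientAddGroup.mk ⟨transgression γ c, hc'⟩ := by
  let T := ((transgressionHom γ).comp (dHom G A (m + 2)).ker.subtype).codRestrict _
    fun c => transgression_mem_ker γ c.2
  refine ⟨fun b => ⟨_, (transgression_dHom γ b).symm⟩, QuotientAddGroup.map _ _ T ?_, ?_⟩
  · rintro c ⟨b, hb⟩
    exact ⟨-transgression γ b, by rw [← transgression_dHom, hb]; rfl⟩
  · exact fun _ _ _ => rfl
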